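/- Let μ be the measure on ℝ² given by μ = (1/2)·(Exp(1) ⊗ Exp(3)) + (1/2)·T, where Exp(λ) denotes the exponential distribution with rate λ (density λe^{−λx} on [0,∞)), Exp(1) ⊗ Exp(3) is the product measure, and T is the pushforward of Exp(2) under the map y ↦ (y, y). Then for every x¹, x² ∈ ℝ, n·( 1 − μ( (−∞, log n + x¹] × (−∞, log n + x²] ) ) → (1/2)·e^{−x¹} as n → ∞. -/

import Mathlib

/-!
For `a, b ≥ 0` the tail `1 - μ((-∞, a] × (-∞, b])` is
`(e^{-a} + e^{-3b} - e^{-a} e^{-3b}) / 2 + e^{-2 min(a, b)} / 2`.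
At `a = log n + x¹`, `b = log n + x²` the term `e^{-a} = e^{-x¹} / n` is of order `1/n`, while
the others are `O(n^{-2})`, so `n` times the tail tends to `e^{-x¹} / 2`.
-/

open MeasureTheory Filter Set
open scoped ENNReal

/-- The exponential distribution with rate `r`: density `r * exp (-(r * x))` on `[0, ∞)`. -/
noncomputable def expMeas (r : ℝ) : Measure ℝ :=
  volume.withDensity fun x => ENNReal.ofReal (if 0 ≤ x then r * Real.exp (-(r * x)) else 0)

/-- The mixture measure of Example 3.7:
`μ = (1/2)·(Exp(1) ⊗ Exp(3)) + (1/2)·(pushforward of Exp(2) under y ↦ (y,y))`. -/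
noncomputable def mixMeas : Measure (ℝ × ℝ) :=
  (1/2 : ℝ≥0∞) • (expMeas 1).prod (expMeas 3) +
    (1/2 : ℝ≥0∞) • (expMeas 2).map (fun y => (y, y))

open ProbabilityTheory Real Topology

lemma expMeas_eq_expMeasure (r : ℝ) : expMeas r = expMeasure r := by
  simp only [expMeas, expMeasure, gammaMeasure, ← exponentialPDF_eq]
  rfl

lemma isProbabilityMeasure_expMeas {r : ℝ} (hr : 0 < r) : IsProbabilityMeasure (expMeas r) := by
  rw [expMeas_eq_expMeasure]; exact isProbabilityMeasure_expMeasure hr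

lemma expMeas_real_Iic {r t : ℝ} (hr : 0 < r) (ht : 0 ≤ t) :
    (expMeas r).real (Iic t) = 1 - exp (-(r * t)) := by
  have := isProbabilityMeasure_expMeasure hr
  rw [expMeas_eq_expMeasure, ← cdf_eq_real, cdf_expMeasure_eq hr, if_pos ht]

lemma measureReal_map_diag_prod {α : Type*} [MeasurableSpace α] (μ : Measure α) {s t : Set α}
    (hs : MeasurableSet s) (ht : MeasurableSet t) :
    (μ.map fun y => (y, y)).real (s ×ˢ t) = μ.real (s ∩ t) := by
  rw [map_measureReal_apply (by fun_prop) (hs.prod ht)]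
  rfl

lemma one_sub_mixMeas_real_Iic_prod_Iic {a b : ℝ} (ha : 0 ≤ a) (hb : 0 ≤ b) :
    1 - mixMeas.real (Iic a ×ˢ Iic b) =
      (exp (-a) + exp (-(3 * b)) - exp (-a) * exp (-(3 * b))) / 2 + exp (-(2 * min a b)) / 2 := by
  have := isProbabilityMeasure_expMeas one_pos
  have := isProbabilityMeasure_expMeas two_pos
  have := isProbabilityMeasure_expMeas three_pos
  rw [mixMeas, measureReal_add_apply (by simp [ENNReal.mul_eq_top]) (by simp [ENNReal.mul_eq_top]),
    measureReal_ennreal_smul_apply, measureReal_ennreal_smul_apply, measureReal_prod_prod, measureReal_map_diag_prod _ measurableSet_Iic measurableSet_Iic,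
    Iic_inter_Iic, expMeas_real_Iic one_pos ha, expMeas_real_Iic three_pos hb,
    expMeas_real_Iic two_pos (le_min ha hb)]
  norm_num
  ring

lemma exp_neg_mul_log_add {t : ℝ} (ht : 0 < t) (r x : ℝ) :
    exp (-(r * (log t + x))) = exp (-(r * x)) * t ^ (-r) := by
  rw [rpow_def_of_pos ht, ← exp_add]
  ring_nf

lemma tendsto_exp_neg_mul_log_add {r : ℝ} (hr : 0 < r) (x : ℝ) :
    Tendsto (fun t => exp (-(r * (log t + x)))) atTop (𝓝 0) := by
  have h := (tendsto_rpow_neg_atTop hr).const_mul (exp (-(r * x)))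
  rw [mul_zero] at h
  refine h.congr' ?_
  filter_upwards [eventually_gt_atTop 0] with t ht
  rw [exp_neg_mul_log_add ht]

lemma tendsto_mul_exp_neg_mul_log_add {r : ℝ} (hr : 1 < r) (x : ℝ) :
    Tendsto (fun t => t * exp (-(r * (log t + x)))) atTop (𝓝 0) := by
  have h := (tendsto_rpow_neg_atTop (sub_pos.mpr hr)).const_mul (exp (-(r * x)))
  rw [mul_zero] at h
  refine h.congr' ?_
  filter_upwards [eventually_gt_atTop 0] with t ht
  rw [exp_neg_mul_log_add ht, neg_sub, sub_eq_add_neg, rpow_add ht, rpow_one]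
  ring

lemma mul_exp_neg_log_add {t : ℝ} (ht : 0 < t) (x : ℝ) : t * exp (-(log t + x)) = exp (-x) := by
  rw [neg_add, exp_add, exp_neg, exp_log ht]
  field_simp

lemma tendsto_mul_one_sub_mixMeas_real_Iic_prod_Iic (x1 x2 : ℝ) :
    Tendsto (fun t => t * (1 - mixMeas.real (Iic (log t + x1) ×ˢ Iic (log t + x2))))
      atTop (𝓝 (1 / 2 * exp (-x1))) := by
  have h3 := tendsto_mul_exp_neg_mul_log_add (r := 3) (by norm_num) x2
  have h3' := tendsto_exp_neg_mul_log_add (r := 3) (by norm_num) x2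
  have h2 := tendsto_mul_exp_neg_mul_log_add (r := 2) (by norm_num) (min x1 x2)
  have hlim := ((((tendsto_const_nhds (x := exp (-x1))).add h3).sub
    (h3'.const_mul (exp (-x1)))).div_const 2).add (h2.div_const 2)
  rw [add_zero, mul_zero, sub_zero, zero_div, add_zero, div_eq_inv_mul, ← one_div] at hlim
  refine hlim.congr' ?_
  have hlog := tendsto_log_atTop
  filter_upwards [eventually_gt_atTop 0, hlog.eventually_ge_atTop (-x1),
    hlog.eventually_ge_atTop (-x2)] with t ht hx1 hx2
  rw [one_sub_mixMeas_real_Iic_prod_Iic (by linarith) (by linarith), min_add_add_left,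
    ← mul_exp_neg_log_add ht x1]
  ring

theorem mixture_exp_domain_of_attraction :
    ∀ x1 x2 : ℝ,
      Tendsto (fun n : ℕ =>
          (n : ℝ) * (1 - (mixMeas (Iic (Real.log n + x1) ×ˢ Iic (Real.log n + x2))).toReal))
        atTop (nhds ((1/2) * Real.exp (-x1))) := fun x1 x2 =>
  (tendsto_mul_one_sub_mixMeas_real_Iic_prod_Iic x1 x2).comp tendsto_natCast_atTop_atTop
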